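/- Let u be a homogeneous polynomial of degree d in n variables. For each nonnegative integer ℓ, set u_ℓ = |x|^{2ℓ} Δ^ℓ u and v_ℓ = |x|^{2ℓ+2} Δ^ℓ u, where |x|² = x₁² + ⋯ + x_n². Then Δ v_ℓ = (ℓ + 1)(2n + 4d − 4ℓ) u_ℓ + u_{ℓ+1}. -/

import Mathlib

open MvPolynomial

/-- The parabolic weight on the variables `x₁, …, x_n, t` (with `t` encoded as `none`):
each `xᵢ` has degree `1` and `t` has degree `2`. The parabolically homogeneous
polynomials `𝒜_pⁿ` of parabolic degree `p` are then
`weightedHomogeneousSubmodule ℝ (parabolicWeight n) p`. -/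
def parabolicWeight (n : ℕ) : Option (Fin n) → ℕ := fun o => o.elim 2 fun _ => 1

/-- The heat operator `∂ₜ - Δ` on polynomials in `x₁, …, x_n, t`
(with `t` encoded as `none`). -/
noncomputable def heatOp (n : ℕ) :
    MvPolynomial (Option (Fin n)) ℝ →ₗ[ℝ] MvPolynomial (Option (Fin n)) ℝ :=
  (pderiv (none : Option (Fin n))).toLinearMap -
    ∑ i : Fin n, ((pderiv (some i)).toLinearMap ∘ₗ (pderiv (some i)).toLinearMap)

/-- The Laplacian `Δ = ∑ᵢ ∂²/∂xᵢ²` on polynomials in `x₁, …, x_n`. -/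
noncomputable def lapOp (n : ℕ) : MvPolynomial (Fin n) ℝ →ₗ[ℝ] MvPolynomial (Fin n) ℝ :=
  ∑ i : Fin n, ((pderiv i).toLinearMap ∘ₗ (pderiv i).toLinearMap)

/-- The polynomial `|x|² = x₁² + ⋯ + x_n²`. -/
noncomputable def normSqPoly (n : ℕ) : MvPolynomial (Fin n) ℝ := ∑ i : Fin n, X i ^ 2

/-! ### Auxiliary lemmas -/

lemma weight_one_eq {n : ℕ} (m : Fin n →₀ ℕ) :
    (Finsupp.weight (1 : Fin n → ℕ)) m = ∑ i : Fin n, m i := by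
  rw [Finsupp.weight_apply, Finsupp.sum_fintype]
  · simp
  · intro i; simp

lemma euler_monomial {n : ℕ} (m : Fin n →₀ ℕ) (a : ℝ) :
    ∑ i : Fin n, X i * pderiv i (monomial m a) =
      (∑ i : Fin n, m i) • monomial m a := by
  have key : ∀ i : Fin n, X i * pderiv i (monomial m a) = m i • monomial m a := by
    intro i
    rw [pderiv_monomial]
    rcases Nat.eq_zero_or_pos (m i) with h | h
    · simp [h]
    · have hle : Finsupp.single i 1 ≤ m := by
        rw [Finsupp.single_le_iff]; exact h
      rw [X, monomial_mul, add_comm, tsub_add_cancel_of_le hle, smul_monomial]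
      congr 1
      rw [nsmul_eq_mul]; ring
  rw [Finset.sum_congr rfl fun i _ => key i, ← Finset.sum_smul]

/-- Euler's identity for homogeneous polynomials. -/
lemma euler {n m : ℕ} {p : MvPolynomial (Fin n) ℝ} (hp : p.IsHomogeneous m) :
    ∑ i : Fin n, X i * pderiv i p = (m : ℝ) • p := by
  rw [Nat.cast_smul_eq_nsmul]
  conv_lhs => rw [← p.support_sum_monomial_coeff]
  conv_rhs => rw [← p.support_sum_monomial_coeff]
  simp only [map_sum, Finset.mul_sum, Finset.smul_sum]
  rw [Finset.sum_comm]
  refine Finset.sum_congr rfl fun d hd => ?_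
  rw [euler_monomial]
  congr 1
  have := hp (mem_support_iff.mp hd)
  rw [← this, weight_one_eq]

lemma degree_fintype {n : ℕ} (d : Fin n →₀ ℕ) : d.degree = ∑ i : Fin n, d i := by
  rw [Finsupp.degree_eq_weight_one, Finsupp.weight_apply, Finsupp.sum_fintype]
  · simp
  · intro i; simp

lemma degree_sub_single {n : ℕ} (d : Fin n →₀ ℕ) (i : Fin n) (h : 0 < d i) :
    (d - Finsupp.single i 1).degree = d.degree - 1 := by
  have hle : Finsupp.single i 1 ≤ d := by rw [Finsupp.single_le_iff]; exact h
  rw [degree_fintype, degree_fintype]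
  rw [Finset.sum_congr rfl fun j _ => Finsupp.tsub_apply d (Finsupp.single i 1) j,
    Finset.sum_tsub_distrib Finset.univ (fun j _ => Finsupp.le_def.mp hle j)]
  congr 1
  simp [Finsupp.single_apply]

lemma pderiv_isHomogeneous {n m : ℕ} {p : MvPolynomial (Fin n) ℝ}
    (hp : p.IsHomogeneous m) (i : Fin n) : (pderiv i p).IsHomogeneous (m - 1) := by
  conv_lhs => rw [← p.support_sum_monomial_coeff]
  rw [map_sum]
  refine IsHomogeneous.sum _ _ _ fun d hd => ?_
  rw [pderiv_monomial]
  rcases Nat.eq_zero_or_pos (d i) with h | h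
  · rw [h]; simpa using isHomogeneous_zero _ ℝ (m - 1)
  · apply isHomogeneous_monomial
    have hdeg : d.degree = m := by
      have := hp (mem_support_iff.mp hd)
      rw [Finsupp.degree_eq_weight_one]; exact this
    rw [degree_sub_single d i h, hdeg]

lemma pderiv_of_isHomogeneous_zero {n : ℕ} {p : MvPolynomial (Fin n) ℝ}
    (hp : p.IsHomogeneous 0) (i : Fin n) : pderiv i p = 0 := by
  conv_lhs => rw [← p.support_sum_monomial_coeff]
  rw [map_sum]
  refine Finset.sum_eq_zero fun d hd => ?_
  have hdeg : d.degree = 0 := by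
    have := hp (mem_support_iff.mp hd)
    rw [Finsupp.degree_eq_weight_one]; exact this
  rw [Finsupp.degree_eq_zero_iff] at hdeg
  subst hdeg
  rw [monomial_zero', pderiv_C]

lemma lapOp_apply (n : ℕ) (p : MvPolynomial (Fin n) ℝ) :
    lapOp n p = ∑ i : Fin n, pderiv i (pderiv i p) := by
  simp [lapOp]

lemma lapOp_isHomogeneous {n m : ℕ} {p : MvPolynomial (Fin n) ℝ}
    (hp : p.IsHomogeneous m) : (lapOp n p).IsHomogeneous (m - 2) := by
  rw [lapOp_apply]
  refine IsHomogeneous.sum _ _ _ fun i _ => ?_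
  have := pderiv_isHomogeneous (pderiv_isHomogeneous hp i) i
  rwa [Nat.sub_sub] at this

lemma lapOp_eq_zero_of_le_one {n m : ℕ} {p : MvPolynomial (Fin n) ℝ}
    (hp : p.IsHomogeneous m) (hm : m ≤ 1) : lapOp n p = 0 := by
  rw [lapOp_apply]
  refine Finset.sum_eq_zero fun i _ => ?_
  have h1 : (pderiv i p).IsHomogeneous 0 := by
    have := pderiv_isHomogeneous hp i
    rwa [Nat.sub_eq_zero_of_le hm] at this
  exact pderiv_of_isHomogeneous_zero h1 i

lemma iter_lap_isHomogeneous {n d : ℕ} {u : MvPolynomial (Fin n) ℝ}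
    (hu : u.IsHomogeneous d) (ℓ : ℕ) :
    ((fun q => lapOp n q)^[ℓ] u).IsHomogeneous (d - 2 * ℓ) := by
  induction ℓ with
  | zero => simpa using hu
  | succ ℓ ih =>
    rw [Function.iterate_succ_apply']
    have := lapOp_isHomogeneous (n := n) ih
    rwa [Nat.sub_sub, show 2 * ℓ + 2 = 2 * (ℓ + 1) by ring] at this

lemma iter_lap_eq_zero {n d : ℕ} {u : MvPolynomial (Fin n) ℝ}
    (hu : u.IsHomogeneous d) (ℓ : ℕ) (h : d < 2 * ℓ) :
    (fun q => lapOp n q)^[ℓ] u = 0 := by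
  induction ℓ with
  | zero => omega
  | succ ℓ ih =>
    rw [Function.iterate_succ_apply']
    rcases lt_or_ge d (2 * ℓ) with h' | h'
    · rw [ih h']; exact map_zero _
    · exact lapOp_eq_zero_of_le_one (iter_lap_isHomogeneous hu ℓ) (by omega)

lemma euler_iter {n d : ℕ} {u : MvPolynomial (Fin n) ℝ}
    (hu : u.IsHomogeneous d) (ℓ : ℕ) :
    ∑ i : Fin n, X i * pderiv i ((fun q => lapOp n q)^[ℓ] u) =
      ((d : ℝ) - 2 * ℓ) • (fun q => lapOp n q)^[ℓ] u := by
  rcases le_or_gt (2 * ℓ) d with h | h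
  · rw [euler (iter_lap_isHomogeneous hu ℓ)]
    congr 1
    push_cast [Nat.cast_sub h]
    ring
  · rw [iter_lap_eq_zero hu ℓ h]
    simp

lemma lapOp_mul (n : ℕ) (p q : MvPolynomial (Fin n) ℝ) :
    lapOp n (p * q) =
      lapOp n p * q + 2 * ∑ i : Fin n, pderiv i p * pderiv i q + p * lapOp n q := by
  simp only [lapOp_apply, Finset.sum_mul, Finset.mul_sum, ← Finset.sum_add_distrib]
  refine Finset.sum_congr rfl fun i _ => ?_
  simp only [pderiv_mul, map_add]
  ring

lemma pderiv_normSq {n : ℕ} (i : Fin n) : pderiv i (normSqPoly n) = 2 * X i := by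
  rw [normSqPoly, map_sum]
  rw [Finset.sum_eq_single i]
  · rw [pderiv_pow, pderiv_X_self]; ring
  · intro j _ hj
    rw [pderiv_pow, pderiv_X_of_ne (fun h => hj h)]; ring
  · intro h; exact absurd (Finset.mem_univ i) h

lemma pderiv_normSq_pow {n k : ℕ} (i : Fin n) :
    pderiv i (normSqPoly n ^ (k + 1)) =
      ((k : ℝ) + 1) • (normSqPoly n ^ k * (2 * X i)) := by
  rw [Derivation.leibniz_pow, pderiv_normSq]
  rw [Nat.add_sub_cancel, smul_eq_mul]
  rw [← Nat.cast_smul_eq_nsmul ℝ]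
  push_cast
  ring_nf

lemma lapOp_normSq (n : ℕ) :
    lapOp n (normSqPoly n) = ((2 : ℝ) * n) • 1 := by
  rw [lapOp_apply]
  have : ∀ i : Fin n, pderiv i (pderiv i (normSqPoly n)) = (2 : MvPolynomial (Fin n) ℝ) := by
    intro i
    have h2 : pderiv i (2 : MvPolynomial (Fin n) ℝ) = 0 := by
      rw [← map_ofNat (C : ℝ →+* MvPolynomial (Fin n) ℝ) 2, pderiv_C]
    rw [pderiv_normSq, pderiv_mul, pderiv_X_self, h2]
    ring
  rw [Finset.sum_congr rfl fun i _ => this i, Finset.sum_const, Finset.card_univ,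
    Fintype.card_fin, nsmul_eq_mul, smul_eq_C_mul]
  simp only [map_mul, map_ofNat, map_natCast, mul_one]
  ring

lemma lapOp_normSq_pow (n k : ℕ) :
    lapOp n (normSqPoly n ^ (k + 1)) =
      (((k : ℝ) + 1) * (2 * n + 4 * k)) • normSqPoly n ^ k := by
  induction k with
  | zero =>
    simp only [zero_add, pow_one, pow_zero, Nat.cast_zero]
    rw [lapOp_normSq]
    norm_num
  | succ k ih =>
    have h2 : normSqPoly n ^ (k + 1 + 1) = normSqPoly n * normSqPoly n ^ (k + 1) := by ring
    rw [h2, lapOp_mul, ih, lapOp_normSq]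
    have hcross : ∀ i : Fin n, pderiv i (normSqPoly n) * pderiv i (normSqPoly n ^ (k + 1)) =
        ((k : ℝ) + 1) • (normSqPoly n ^ k * (4 * X i ^ 2)) := by
      intro i
      rw [pderiv_normSq, pderiv_normSq_pow, mul_smul_comm]
      congr 1
      ring
    rw [Finset.sum_congr rfl fun i _ => hcross i, ← Finset.smul_sum, ← Finset.mul_sum,
      ← Finset.mul_sum, show ∑ i : Fin n, X i ^ 2 = normSqPoly n from rfl]
    simp only [smul_eq_C_mul, map_mul, map_add, map_ofNat, map_natCast, map_one]
    push_cast
    ring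

/-- Equations (3.14)–(3.16) in the proof of Lemma 3.3: if `u` is a homogeneous polynomial
of degree `d` in `n` variables and, for `ℓ ≥ 0`, `u_ℓ = |x|^{2ℓ} Δ^ℓ u` and
`v_ℓ = |x|^{2ℓ+2} Δ^ℓ u`, then `Δ v_ℓ = (ℓ+1)(2n+4d-4ℓ) u_ℓ + u_{ℓ+1}`. -/
theorem lap_v_ell (n d ℓ : ℕ) (u : MvPolynomial (Fin n) ℝ) (hu : u.IsHomogeneous d) :
    lapOp n (normSqPoly n ^ (ℓ + 1) * (fun q => lapOp n q)^[ℓ] u) =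
      (((ℓ : ℝ) + 1) * (2 * n + 4 * d - 4 * ℓ)) •
          (normSqPoly n ^ ℓ * (fun q => lapOp n q)^[ℓ] u) +
        normSqPoly n ^ (ℓ + 1) * (fun q => lapOp n q)^[ℓ + 1] u := by
  set w := (fun q => lapOp n q)^[ℓ] u with hw
  have hcross : ∀ i : Fin n, pderiv i (normSqPoly n ^ (ℓ + 1)) * pderiv i w =
      ((ℓ : ℝ) + 1) • (normSqPoly n ^ ℓ * (2 * (X i * pderiv i w))) := by
    intro i
    rw [pderiv_normSq_pow, smul_mul_assoc]
    congr 1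
    ring
  rw [lapOp_mul, lapOp_normSq_pow,
    Finset.sum_congr rfl fun i _ => hcross i, ← Finset.smul_sum, ← Finset.mul_sum,
    ← Finset.mul_sum, euler_iter hu ℓ, Function.iterate_succ_apply', ← hw]
  simp only [smul_eq_C_mul, map_mul, map_add, map_sub, map_ofNat, map_natCast, map_one]
  ring
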